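/- arXiv:2506.08645 — 2 statements merged into one kernel-verified Lean document; each statement's English description precedes it below -/
import Mathlib

section
/- Let ψ_X, ψ_T be maps into a space Z, φ : Z → R^s a feature map with kernel k(z,z') = ⟨φ(z), φ(z')⟩, γ_X : X → Z' a map, φ' : Z' → R^d a feature map with kernel k'(w,w') = ⟨φ'(w), φ'(w')⟩, and C > 0. Define φ̃_{γ,X}(x) := (1/√2)·[√(C/d)·1_d + φ'(γ_X(x)), √(C/d)·1_d − φ'(γ_X(x))], φ̃_{γ,T} := √(C/(2d))·1_{2d}, E_X(x) := φ(ψ_X(x)) ⊗ φ̃_{γ,X}(x), and E_T(t) := φ(ψ_T(t)) ⊗ φ̃_{γ,T}. Then for all x, x' ∈ X and t, t' ∈ T: (1) ⟨E_X(x), E_X(x')⟩ = k(ψ_X(x), ψ_X(x')) · (C + k'(γ_X(x), γ_X(x'))); (2) ⟨E_T(t), E_T(t')⟩ = C · k(ψ_T(t), ψ_T(t')); (3) ⟨E_X(x), E_T(t)⟩ = C · k(ψ_X(x), ψ_T(t)). -/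
open Matrix

/-- Kronecker product of vectors indexed by a product type. -/
def vecKron {ι κ : Type*} (u : ι → ℝ) (v : κ → ℝ) : ι × κ → ℝ :=
  fun p => u p.1 * v p.2

/-- The symmetrized embedding. -/
noncomputable def symEmb {X : Type*} {d : ℕ} (C : ℝ) (φ : X → Fin d → ℝ) (x : X) :
    Fin d ⊕ Fin d → ℝ :=
  Sum.elim (fun i => (1 / Real.sqrt 2) * (Real.sqrt (C / d) + φ x i))
           (fun i => (1 / Real.sqrt 2) * (Real.sqrt (C / d) - φ x i))

/-- The constant "missing modality" embedding `√(C/(2d))·1_{2d}`. -/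
noncomputable def constEmb (d : ℕ) (C : ℝ) : Fin d ⊕ Fin d → ℝ :=
  fun _ => Real.sqrt (C / (2 * d))

/-! The symmetrized embedding realizes the kernel `C + k'`, since the cross terms of its two
halves cancel; the constant embedding is the symmetrized embedding of the zero feature map, so
all three identities follow from that single computation and `⟨u ⊗ v, u' ⊗ v'⟩ = ⟨u, u'⟩ ⟨v, v'⟩`. -/

lemma vecKron_dotProduct_vecKron {ι κ : Type*} [Fintype ι] [Fintype κ] (u u' : ι → ℝ)
    (v v' : κ → ℝ) : vecKron u v ⬝ᵥ vecKron u' v' = (u ⬝ᵥ u') * (v ⬝ᵥ v') := by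
  simp only [vecKron, dotProduct, Fintype.sum_prod_type, Finset.sum_mul_sum]
  exact Finset.sum_congr rfl fun i _ => Finset.sum_congr rfl fun j _ => by ring

lemma symEmb_inl_mul_add_symEmb_inr_mul {X Y : Type*} {d : ℕ} {C : ℝ} (hC : 0 ≤ C)
    (φ : X → Fin d → ℝ) (ϕ : Y → Fin d → ℝ) (x : X) (y : Y) (i : Fin d) :
    symEmb C φ x (.inl i) * symEmb C ϕ y (.inl i) + symEmb C φ x (.inr i) * symEmb C ϕ y (.inr i)
      = C / d + φ x i * ϕ y i := by
  have hsqrt2 : (1 / √2) ^ 2 = 1 / 2 := by rw [div_pow, one_pow, Real.sq_sqrt zero_le_two]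
  have hsqrt : √(C / d) ^ 2 = C / d := Real.sq_sqrt (div_nonneg hC d.cast_nonneg)
  simp only [symEmb, Sum.elim_inl, Sum.elim_inr]
  linear_combination (2 * √(C / d) ^ 2 + 2 * φ x i * ϕ y i) * hsqrt2 + hsqrt

lemma symEmb_dotProduct_symEmb {X Y : Type*} {d : ℕ} {C : ℝ} (hd : d ≠ 0) (hC : 0 ≤ C)
    (φ : X → Fin d → ℝ) (ϕ : Y → Fin d → ℝ) (x : X) (y : Y) :
    symEmb C φ x ⬝ᵥ symEmb C ϕ y = C + φ x ⬝ᵥ ϕ y := by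
  simp only [dotProduct, Fintype.sum_sum_type, ← Finset.sum_add_distrib,
    symEmb_inl_mul_add_symEmb_inr_mul hC]
  rw [Finset.sum_add_distrib, Fin.sum_const, nsmul_eq_mul,
    mul_div_cancel₀ C (Nat.cast_ne_zero.mpr hd)]

lemma constEmb_eq_symEmb_zero (d : ℕ) (C : ℝ) :
    constEmb d C = symEmb C (fun _ : Unit => (0 : Fin d → ℝ)) () := by
  have hsqrt : √(C / (2 * d)) = 1 / √2 * √(C / d) := by
    rw [one_div, ← Real.sqrt_inv, ← Real.sqrt_mul (inv_nonneg.mpr zero_le_two)]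
    ring_nf
  funext i
  cases i <;> simp [constEmb, symEmb, hsqrt]

/-- Proposition 2 (KrossFuse): inner products of the fused embeddings
`E_X(x) = φ(ψ_X(x)) ⊗ φ̃_{γ,X}(x)` and `E_T(t) = φ(ψ_T(t)) ⊗ φ̃_{γ,T}`. -/
theorem krossFuse_inner_products {X T Z Z' : Type*} {s d : ℕ} (hd : 0 < d)
    (C : ℝ) (hC : 0 < C)
    (ψX : X → Z) (ψT : T → Z) (φ : Z → Fin s → ℝ)
    (k : Z → Z → ℝ) (hk : ∀ z z', k z z' = φ z ⬝ᵥ φ z')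
    (γX : X → Z') (φ' : Z' → Fin d → ℝ)
    (k' : Z' → Z' → ℝ) (hk' : ∀ w w', k' w w' = φ' w ⬝ᵥ φ' w') :
    (∀ x x' : X,
      vecKron (φ (ψX x)) (symEmb C (fun a => φ' (γX a)) x) ⬝ᵥ
        vecKron (φ (ψX x')) (symEmb C (fun a => φ' (γX a)) x')
        = k (ψX x) (ψX x') * (C + k' (γX x) (γX x'))) ∧
    (∀ t t' : T,
      vecKron (φ (ψT t)) (constEmb d C) ⬝ᵥ vecKron (φ (ψT t')) (constEmb d C)
        = C * k (ψT t) (ψT t')) ∧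
    (∀ (x : X) (t : T),
      vecKron (φ (ψX x)) (symEmb C (fun a => φ' (γX a)) x) ⬝ᵥ
        vecKron (φ (ψT t)) (constEmb d C)
        = C * k (ψX x) (ψT t)) := by
  refine ⟨fun x x' => ?_, fun t t' => ?_, fun x t => ?_⟩ <;>
    simp only [vecKron_dotProduct_vecKron, constEmb_eq_symEmb_zero,
      symEmb_dotProduct_symEmb hd.ne' hC.le, hk, hk', dotProduct_zero, add_zero, mul_comm]
end

section
/- Let U1 ∈ R^{l×d1} and U2 ∈ R^{l×d2} be random matrices with rows u_{1,i}^T and u_{2,i}^T, where all entries are i.i.d. with mean 0 and variance 1 (e.g., uniform on [−√3,√3]), and the rows across i are independent. For vectors a1, b1 ∈ R^{d1}, a2, b2 ∈ R^{d2}, define ã := (1/√l)(U1 a1) ⊙ (U2 a2) and b̃ := (1/√l)(U1 b1) ⊙ (U2 b2), where ⊙ is the Hadamard product. Then E[⟨ã, b̃⟩] = (a1^T b1)(a2^T b2). -/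
open Matrix MeasureTheory ProbabilityTheory

/-!
Expanding the dot product row by row,
`⟨ã, b̃⟩ = (1/l) ∑ᵢ (u₁ᵢ ⬝ a₁)(u₁ᵢ ⬝ b₁) · (u₂ᵢ ⬝ a₂)(u₂ᵢ ⬝ b₂)`.
Since `u₁ᵢ` and `u₂ᵢ` are independent, the expectation of each summand factors, and for an
isotropic vector (`E[u uᵀ] = I`) one has `E[(u ⬝ a)(u ⬝ b)] = aᵀ E[u uᵀ] b = a ⬝ b`.
-/

section SecondMoment

variable {Ω ι : Type*} [MeasurableSpace Ω] (μ : Measure Ω)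

noncomputable def secondMoment (X : Ω → ι → ℝ) : Matrix ι ι ℝ :=
  Matrix.of fun j k => ∫ ω, X ω j * X ω k ∂μ

variable {μ} {X : Ω → ι → ℝ}

lemma secondMoment_eq_one [DecidableEq ι]
    (hcov : ∀ j k, ∫ ω, X ω j * X ω k ∂μ = if j = k then 1 else 0) :
    secondMoment μ X = 1 := by
  ext j k
  rw [secondMoment, of_apply, hcov, one_apply]

variable [Fintype ι]

lemma dotProduct_mul_dotProduct_eq_sum (x a b : ι → ℝ) :
    (x ⬝ᵥ a) * (x ⬝ᵥ b) = ∑ j, ∑ k, a j * (x j * x k) * b k := by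
  simp only [dotProduct, Finset.sum_mul_sum]
  exact Finset.sum_congr rfl fun j _ => Finset.sum_congr rfl fun k _ => by ring

lemma integrable_dotProduct_mul_dotProduct
    (hint : ∀ j k, Integrable (fun ω => X ω j * X ω k) μ) (a b : ι → ℝ) :
    Integrable (fun ω => (X ω ⬝ᵥ a) * (X ω ⬝ᵥ b)) μ := by
  simp only [dotProduct_mul_dotProduct_eq_sum]
  exact integrable_finsetSum _ fun j _ => integrable_finsetSum _ fun k _ =>
    ((hint j k).const_mul _).mul_const _

lemma integral_dotProduct_mul_dotProduct
    (hint : ∀ j k, Integrable (fun ω => X ω j * X ω k) μ) (a b : ι → ℝ) :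
    ∫ ω, (X ω ⬝ᵥ a) * (X ω ⬝ᵥ b) ∂μ = a ⬝ᵥ secondMoment μ X *ᵥ b := by
  have hterm : ∀ j k, Integrable (fun ω => a j * (X ω j * X ω k) * b k) μ :=
    fun j k => ((hint j k).const_mul _).mul_const _
  simp only [dotProduct_mul_dotProduct_eq_sum]
  rw [integral_finsetSum _ fun j _ => integrable_finsetSum _ fun k _ => hterm j k]
  simp only [integral_finsetSum _ fun k _ => hterm _ k, integral_mul_const, integral_const_mul,
    dotProduct, mulVec, secondMoment, Finset.mul_sum, of_apply]
  exact Finset.sum_congr rfl fun j _ => Finset.sum_congr rfl fun k _ => by ring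

end SecondMoment

namespace ProbabilityTheory.IndepFun

variable {Ω ι κ : Type*} [MeasurableSpace Ω] {μ : Measure Ω} [Fintype ι] [Fintype κ]
  {X : Ω → ι → ℝ} {Y : Ω → κ → ℝ}

lemma quadratic_quadratic (hXY : IndepFun X Y μ) (a b : ι → ℝ) (c d : κ → ℝ) :
    IndepFun (fun ω => (X ω ⬝ᵥ a) * (X ω ⬝ᵥ b)) (fun ω => (Y ω ⬝ᵥ c) * (Y ω ⬝ᵥ d)) μ :=
  hXY.comp ((continuous_id.dotProduct continuous_const).mul
      (continuous_id.dotProduct continuous_const)).measurable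
    ((continuous_id.dotProduct continuous_const).mul
      (continuous_id.dotProduct continuous_const)).measurable

variable (hXY : IndepFun X Y μ) (hintX : ∀ j k, Integrable (fun ω => X ω j * X ω k) μ)
  (hintY : ∀ j k, Integrable (fun ω => Y ω j * Y ω k) μ) (a b : ι → ℝ) (c d : κ → ℝ)
include hXY hintX hintY

lemma integrable_quadratic_mul_quadratic :
    Integrable (fun ω => (X ω ⬝ᵥ a) * (X ω ⬝ᵥ b) * ((Y ω ⬝ᵥ c) * (Y ω ⬝ᵥ d))) μ :=
  (hXY.quadratic_quadratic a b c d).integrable_mul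
    (integrable_dotProduct_mul_dotProduct hintX a b)
    (integrable_dotProduct_mul_dotProduct hintY c d)

lemma integral_quadratic_mul_quadratic :
    ∫ ω, (X ω ⬝ᵥ a) * (X ω ⬝ᵥ b) * ((Y ω ⬝ᵥ c) * (Y ω ⬝ᵥ d)) ∂μ
      = (a ⬝ᵥ secondMoment μ X *ᵥ b) * (c ⬝ᵥ secondMoment μ Y *ᵥ d) := by
  rw [(hXY.quadratic_quadratic a b c d).integral_fun_mul_eq_mul_integral
      (integrable_dotProduct_mul_dotProduct hintX a b).aestronglyMeasurable
      (integrable_dotProduct_mul_dotProduct hintY c d).aestronglyMeasurable,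
    integral_dotProduct_mul_dotProduct hintX, integral_dotProduct_mul_dotProduct hintY]

end ProbabilityTheory.IndepFun

theorem rp_hadamard_unbiased_general {Ω : Type*} [MeasurableSpace Ω] (μ : Measure Ω)
    {l d1 d2 : ℕ} (hl : 0 < l)
    (U1 : Ω → Fin l → Fin d1 → ℝ) (U2 : Ω → Fin l → Fin d2 → ℝ)
    (hint1 : ∀ i j k, Integrable (fun ω => U1 ω i j * U1 ω i k) μ)
    (hint2 : ∀ i j k, Integrable (fun ω => U2 ω i j * U2 ω i k) μ)
    (hcov1 : ∀ i j k, ∫ ω, U1 ω i j * U1 ω i k ∂μ = if j = k then 1 else 0)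
    (hcov2 : ∀ i j k, ∫ ω, U2 ω i j * U2 ω i k ∂μ = if j = k then 1 else 0)
    (hrowIndep : ∀ i, IndepFun (fun ω => U1 ω i) (fun ω => U2 ω i) μ)
    (a1 b1 : Fin d1 → ℝ) (a2 b2 : Fin d2 → ℝ) :
    (∫ ω, ((fun i => (1 / Real.sqrt l) * ((U1 ω i ⬝ᵥ a1) * (U2 ω i ⬝ᵥ a2))) ⬝ᵥ
            (fun i => (1 / Real.sqrt l) * ((U1 ω i ⬝ᵥ b1) * (U2 ω i ⬝ᵥ b2)))) ∂μ)
      = (a1 ⬝ᵥ b1) * (a2 ⬝ᵥ b2) := by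
  have hscale : 1 / Real.sqrt l * (1 / Real.sqrt l) = 1 / l := by
    rw [div_mul_div_comm, one_mul, Real.mul_self_sqrt l.cast_nonneg]
  have hrow : ∀ i, ∫ ω, (U1 ω i ⬝ᵥ a1) * (U1 ω i ⬝ᵥ b1) * ((U2 ω i ⬝ᵥ a2) * (U2 ω i ⬝ᵥ b2)) ∂μ
      = (a1 ⬝ᵥ b1) * (a2 ⬝ᵥ b2) := fun i => by
    rw [(hrowIndep i).integral_quadratic_mul_quadratic (hint1 i) (hint2 i),
      secondMoment_eq_one (hcov1 i), secondMoment_eq_one (hcov2 i), one_mulVec, one_mulVec]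
  calc _ = ∫ ω, 1 / (l : ℝ) * ∑ i, (U1 ω i ⬝ᵥ a1) * (U1 ω i ⬝ᵥ b1) *
          ((U2 ω i ⬝ᵥ a2) * (U2 ω i ⬝ᵥ b2)) ∂μ := by
        congr 1 with ω
        rw [dotProduct, Finset.mul_sum]
        refine Finset.sum_congr rfl fun i _ => ?_
        linear_combination
          (U1 ω i ⬝ᵥ a1) * (U1 ω i ⬝ᵥ b1) * ((U2 ω i ⬝ᵥ a2) * (U2 ω i ⬝ᵥ b2)) * hscale
    _ = (a1 ⬝ᵥ b1) * (a2 ⬝ᵥ b2) := by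
      rw [integral_const_mul, integral_finsetSum _ fun i _ =>
        (hrowIndep i).integrable_quadratic_mul_quadratic (hint1 i) (hint2 i) a1 b1 a2 b2]
      simp only [hrow, Finset.sum_const, Finset.card_univ, Fintype.card_fin, nsmul_eq_mul]
      field_simp

/-- The RP-KrossFuse embedding `(1/√l)(U1 a1) ⊙ (U2 a2)` is an unbiased estimator of
the Kronecker-product kernel: `E[⟨ã, b̃⟩] = (a1ᵀb1)(a2ᵀb2)`. -/
theorem rp_hadamard_unbiased {Ω : Type*} [MeasurableSpace Ω] (μ : Measure Ω)
    [IsProbabilityMeasure μ] {l d1 d2 : ℕ} (hl : 0 < l)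
    (U1 : Ω → Fin l → Fin d1 → ℝ) (U2 : Ω → Fin l → Fin d2 → ℝ)
    (hm1 : Measurable U1) (hm2 : Measurable U2)
    (hmean1 : ∀ i j, ∫ ω, U1 ω i j ∂μ = 0) (hmean2 : ∀ i j, ∫ ω, U2 ω i j ∂μ = 0)
    (hint1 : ∀ i j k, Integrable (fun ω => U1 ω i j * U1 ω i k) μ)
    (hint2 : ∀ i j k, Integrable (fun ω => U2 ω i j * U2 ω i k) μ)
    (hcov1 : ∀ i j k, ∫ ω, U1 ω i j * U1 ω i k ∂μ = if j = k then 1 else 0)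
    (hcov2 : ∀ i j k, ∫ ω, U2 ω i j * U2 ω i k ∂μ = if j = k then 1 else 0)
    (hrows : iIndepFun
      (fun (i : Fin l) (ω : Ω) => (U1 ω i, U2 ω i)) μ)
    (hrowIndep : ∀ i, IndepFun (fun ω => U1 ω i) (fun ω => U2 ω i) μ)
    (a1 b1 : Fin d1 → ℝ) (a2 b2 : Fin d2 → ℝ) :
    (∫ ω, ((fun i => (1 / Real.sqrt l) * ((U1 ω i ⬝ᵥ a1) * (U2 ω i ⬝ᵥ a2))) ⬝ᵥ
            (fun i => (1 / Real.sqrt l) * ((U1 ω i ⬝ᵥ b1) * (U2 ω i ⬝ᵥ b2)))) ∂μ)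
      = (a1 ⬝ᵥ b1) * (a2 ⬝ᵥ b2) :=
  rp_hadamard_unbiased_general μ hl U1 U2 hint1 hint2 hcov1 hcov2 hrowIndep a1 b1 a2 b2
end
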